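/- Directional derivative of the soft-optimal value in the reward (Lemma first_der): Let β > 0 and let r, h be bounded measurable rewards. For ε ∈ ℝ set r^ε := r + εh and π^ε := π*_{r^ε}. Then for every t, s, a, the maps ε ↦ V*_{t,r^ε}(s), ε ↦ Q*_{t,r^ε}(s,a), and ε ↦ J*(r^ε) are differentiable, with derivatives d/dε V*_{t,r^ε}(s) = V^{π^ε,0}_{t,h}(s), d/dε Q*_{t,r^ε}(s,a) = Q^{π^ε,0}_{t,h}(s,a), and d/dε J*(r^ε) = J⁰(h, π^ε) = Σ_{t=1}^T E^{π^ε}[ h_t(s_t,a_t) ], where V^{π,0}_{t,h}, Q^{π,0}_{t,h}, J⁰(h,π) denote the unregularized (β = 0) value, Q-function, and expected return of the policy π for the reward h, and E^{π^ε} is expectation under the trajectory law P^{π^ε}. -/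

import Mathlib

open MeasureTheory ProbabilityTheory Real
open scoped ENNReal RealInnerProductSpace

noncomputable section

namespace IRL

variable {S A : Type*} [MeasurableSpace S] [MeasurableSpace A]

/-- A reward tuple `(r_t)` of bounded measurable functions. -/
def IsBddReward (r : ℕ → S → A → ℝ) : Prop :=
  ∀ t, Measurable (fun q : S × A => r t q.1 q.2) ∧ ∃ C, ∀ s a, |r t s a| ≤ C

/-- `p` is a family of `ν`-probability densities of a Markov policy. -/
def IsPolicyDensity (ν : Measure A) (p : ℕ → S → A → ℝ) : Prop :=
  (∀ t, Measurable (fun q : S × A => p t q.1 q.2)) ∧ (∀ t s a, 0 ≤ p t s a) ∧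
    (∀ t s, ∫ a, p t s a ∂ν = 1)

/-- the log-densities `log π_t` are bounded (in particular the densities are positive). -/
def HasBddLogDensity (p : ℕ → S → A → ℝ) : Prop :=
  ∀ t, (∀ s a, 0 < p t s a) ∧ ∃ C, ∀ s a, |Real.log (p t s a)| ≤ C

variable (T : ℕ) (P : ℕ → Kernel (S × A) S) (ν : Measure A)

/-- Soft-optimal value function `V*_{t,r}` (backward recursion, `V* t ≡ 0` for `t > T`). -/
def Vstar (β : ℝ) (r : ℕ → S → A → ℝ) (t : ℕ) (s : S) : ℝ :=
  if T < t then 0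
  else β * Real.log (∫ a, Real.exp ((r t s a + ∫ s', Vstar β r (t + 1) s' ∂(P t (s, a))) / β) ∂ν)
termination_by T + 1 - t
decreasing_by omega

/-- Soft-optimal state-action value `Q*_{t,r}`. -/
def Qstar (β : ℝ) (r : ℕ → S → A → ℝ) (t : ℕ) (s : S) (a : A) : ℝ :=
  r t s a + ∫ s', Vstar T P ν β r (t + 1) s' ∂(P t (s, a))

/-- `ν`-density of the soft-optimal policy `π*_r`. -/
def piStar (β : ℝ) (r : ℕ → S → A → ℝ) (t : ℕ) (s : S) (a : A) : ℝ :=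
  Real.exp ((Qstar T P ν β r t s a - Vstar T P ν β r t s) / β)

/-- Value function `V^π_{t,r}` of a policy given by densities `p` (with `β = 0` this is the
unregularized value function `V^{π,0}`). -/
def Vpol (β : ℝ) (p r : ℕ → S → A → ℝ) (t : ℕ) (s : S) : ℝ :=
  if T < t then 0
  else ∫ a,
    (r t s a + (∫ s', Vpol β p r (t + 1) s' ∂(P t (s, a))) - β * Real.log (p t s a)) * p t s a ∂ν
termination_by T + 1 - t
decreasing_by omega

/-- `Q^π_{t,r}` for a policy given by densities `p`. -/
def Qpol (β : ℝ) (p r : ℕ → S → A → ℝ) (t : ℕ) (s : S) (a : A) : ℝ :=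
  r t s a + ∫ s', Vpol T P ν β p r (t + 1) s' ∂(P t (s, a))

/-- Regularized advantage `A^π_{t,r}(s,a) = Q^π - V^π - β log π_t(a|s)`. -/
def Apol (β : ℝ) (p r : ℕ → S → A → ℝ) (t : ℕ) (s : S) (a : A) : ℝ :=
  Qpol T P ν β p r t s a - Vpol T P ν β p r t s - β * Real.log (p t s a)

variable (P0 : Measure S)

/-- Optimal value `J*(r) = ∫ V*_{1,r} dP₀`. -/
def Jstar (β : ℝ) (r : ℕ → S → A → ℝ) : ℝ := ∫ s, Vstar T P ν β r 1 s ∂P0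

/-- Expected (regularized) return `J(r,π)` of a density policy. -/
def Jpol (β : ℝ) (p r : ℕ → S → A → ℝ) : ℝ := ∫ s, Vpol T P ν β p r 1 s ∂P0

/-- Iterated expectation, from time `t` in state `s`, of a trajectory functional `g` under a
(kernel) Markov policy `π`; coordinates of the trajectory outside `{1,…,T}` are irrelevant
junk values. -/
def polExp [Nonempty S] [Nonempty A] (pol : ℕ → Kernel S A) (g : (ℕ → S × A) → ℝ) (t : ℕ)
    (s : S) : ℝ :=
  if T < t then g (fun _ => (Classical.arbitrary S, Classical.arbitrary A))
  else ∫ a, ∫ s', polExp pol (fun τ => g (Function.update τ t (s, a))) (t + 1) s' ∂(P t (s, a))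
    ∂(pol t s)
termination_by T + 1 - t
decreasing_by omega

/-- `μ` is the trajectory law `P^π` of the Markov policy `π` (with initial distribution `P₀`),
characterized through integrals of all bounded measurable trajectory functionals. -/
def IsTrajLaw [Nonempty S] [Nonempty A] (pol : ℕ → Kernel S A) (μ : Measure (ℕ → S × A)) : Prop :=
  IsProbabilityMeasure μ ∧
    ∀ g : (ℕ → S × A) → ℝ, Measurable g → (∃ C, ∀ τ, |g τ| ≤ C) →
      ∫ τ, g τ ∂μ = ∫ s, polExp T P pol g 1 s ∂P0

/-- The kernel `s ↦ p t s ⬝ ν` of a policy given by densities. -/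
def densKernel [IsFiniteMeasure ν] (p : ℕ → S → A → ℝ) (t : ℕ) : Kernel S A :=
  Kernel.withDensity (Kernel.const S ν) fun s a => ENNReal.ofReal (p t s a)

open Classical in
/-- Kullback–Leibler divergence `∫ log (dμ/dμ') dμ` if `μ ≪ μ'` (`∞` otherwise). -/
def KL {X : Type*} [MeasurableSpace X] (μ μ' : Measure X) : ℝ≥0∞ :=
  if μ ≪ μ' ∧ Integrable (fun x => Real.log (μ.rnDeriv μ' x).toReal) μ then
    ENNReal.ofReal (∫ x, Real.log (μ.rnDeriv μ' x).toReal ∂μ)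
  else ⊤

/-- Squared Hellinger distance, computed with the dominating measure `μ + μ'`. -/
def sqHellinger {X : Type*} [MeasurableSpace X] (μ μ' : Measure X) : ℝ :=
  ∫ x, (Real.sqrt ((μ.rnDeriv (μ + μ') x).toReal)
      - Real.sqrt ((μ'.rnDeriv (μ + μ') x).toReal)) ^ 2 ∂(μ + μ')

/-- Second directional derivative. -/
def D2 {E : Type*} [NormedAddCommGroup E] [NormedSpace ℝ E] (F : E → ℝ) (θ ξ ζ : E) : ℝ :=
  fderiv ℝ (fun x => fderiv ℝ F x ζ) θ ξ

/-- Third directional derivative. -/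
def D3 {E : Type*} [NormedAddCommGroup E] [NormedSpace ℝ E] (F : E → ℝ) (θ ξ ζ ω : E) : ℝ :=
  fderiv ℝ (fun x => D2 F x ζ ω) θ ξ

end IRL

/-!
Backward induction in `t`. Since `V*_t(s) = β log ∫ exp (Q*_t(s, ·) / β) dν`, its derivative is
the average of `∂_ε Q*_t(s, ·)` under the Gibbs density `exp ((Q*_t - V*_t) / β) = π*_t`.
Differentiating `Q*_t = r_t + ε h_t + ∫ V*_{t+1} dP_t` under the integral sign, which is allowed
because `|V^{π,0}_{t+1, h}| ≤ (T - t) sup |h|` uniformly in the policy, gives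
`h_t + ∫ V^{π^ε,0}_{t+1, h} dP_t = Q^{π^ε,0}_{t, h}`; averaging under `π^ε_t` then gives
`V^{π^ε,0}_{t, h}`. For the trajectory formula, unrolling the first step of the iterated expectation
of `∑_t h_t(s_t, a_t)` reproduces the recursion of `V^{π,0}_{h}`.
-/

open Topology

theorem Nat.backward_induction (T : ℕ) {motive : ℕ → Prop} (of_lt : ∀ t, T < t → motive t)
    (step : ∀ t ≤ T, motive (t + 1) → motive t) (t : ℕ) : motive t := by
  induction hn : T + 1 - t generalizing t with
  | zero => exact of_lt t (by omega)
  | succ n ih =>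
    by_cases ht : T < t
    · exact of_lt t ht
    · exact step t (by omega) (ih (t + 1) (by omega))

theorem Real.exp_div_le_exp_div_of_abs_le {x M β : ℝ} (hβ : 0 < β) (hx : |x| ≤ M) :
    Real.exp (x / β) ≤ Real.exp (M / β) :=
  Real.exp_le_exp.2 (div_le_div_of_nonneg_right (le_of_abs_le hx) hβ.le)

section Integral

variable {X : Type*} [MeasurableSpace X] {μ : Measure X}

theorem abs_integral_le_of_forall_abs_le [IsProbabilityMeasure μ] {f : X → ℝ} {C : ℝ}
    (hf : ∀ x, |f x| ≤ C) : |∫ x, f x ∂μ| ≤ C := by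
  simpa using norm_integral_le_of_norm_le_const (μ := μ) (.of_forall (p := (‖f ·‖ ≤ C)) hf)

theorem abs_add_integral_le [IsProbabilityMeasure μ] {f : X → ℝ} {x C B : ℝ} (hx : |x| ≤ C)
    (hf : ∀ y, |f y| ≤ B) : |x + ∫ y, f y ∂μ| ≤ C + B :=
  (abs_add_le _ _).trans (add_le_add hx (abs_integral_le_of_forall_abs_le hf))

theorem integrable_of_forall_abs_le [IsFiniteMeasure μ] {f : X → ℝ} {C : ℝ} (hfm : Measurable f)
    (hf : ∀ x, |f x| ≤ C) : Integrable f μ :=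
  .of_bound hfm.aestronglyMeasurable C (.of_forall hf)

theorem hasDerivAt_integral_of_forall_abs_deriv_le [IsFiniteMeasure μ] {F F' : ℝ → X → ℝ}
    {ε C : ℝ} {U : Set ℝ} (hU : U ∈ 𝓝 ε) (hF_meas : ∀ e, AEStronglyMeasurable (F e) μ)
    (hF_int : Integrable (F ε) μ) (hF'_meas : AEStronglyMeasurable (F' ε) μ)
    (hF'_le : ∀ e ∈ U, ∀ x, |F' e x| ≤ C) (hF : ∀ e ∈ U, ∀ x, HasDerivAt (F · x) (F' e x) e) :
    HasDerivAt (fun e => ∫ x, F e x ∂μ) (∫ x, F' ε x ∂μ) ε :=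
  (hasDerivAt_integral_of_dominated_loc_of_deriv_le hU (.of_forall hF_meas) hF_int hF'_meas
    (.of_forall fun x e he => hF'_le e he x) (integrable_const C)
    (.of_forall fun x e he => hF e he x)).2

theorem abs_integral_mul_le {p f : X → ℝ} {B : ℝ} (hp0 : ∀ x, 0 ≤ p x)
    (hp1 : ∫ x, p x ∂μ = 1) (hfm : Measurable f) (hf : ∀ x, |f x| ≤ B) :
    |∫ x, p x * f x ∂μ| ≤ B := by
  have hp : Integrable p μ := .of_integral_ne_zero (by simp [hp1])
  calc |∫ x, p x * f x ∂μ| ≤ ∫ x, |p x * f x| ∂μ := abs_integral_le_integral_abs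
    _ ≤ ∫ x, B * p x ∂μ := by
        refine integral_mono (hp.mul_bdd hfm.aestronglyMeasurable (.of_forall hf)).abs
          (hp.const_mul B) fun x => ?_
        rw [abs_mul, abs_of_nonneg (hp0 x), mul_comm]
        exact mul_le_mul_of_nonneg_right (hf x) (hp0 x)
    _ = B := by rw [integral_const_mul, hp1, mul_one]

end Integral

namespace IRL

section LogIntegralExp

variable {A : Type*} [MeasurableSpace A] (ν : Measure A)

def logIntegralExp (β : ℝ) (F : A → ℝ) : ℝ := β * Real.log (∫ a, Real.exp (F a / β) ∂ν)

variable {ν} [IsFiniteMeasure ν] {β : ℝ} {F : A → ℝ} {M : ℝ}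

theorem integrable_exp_div (hβ : 0 < β) (hF : Measurable F) (hFM : ∀ a, |F a| ≤ M) :
    Integrable (fun a => Real.exp (F a / β)) ν :=
  integrable_of_forall_abs_le (Real.measurable_exp.comp (hF.div_const β)) fun a => by
    rw [abs_of_pos (Real.exp_pos _)]
    exact Real.exp_div_le_exp_div_of_abs_le hβ (hFM a)

theorem integral_exp_div_pos [NeZero ν] (hβ : 0 < β) (hF : Measurable F)
    (hFM : ∀ a, |F a| ≤ M) : 0 < ∫ a, Real.exp (F a / β) ∂ν :=
  integral_exp_pos (integrable_exp_div hβ hF hFM)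

theorem abs_logIntegralExp_le [NeZero ν] (hβ : 0 < β) (hF : Measurable F)
    (hFM : ∀ a, |F a| ≤ M) :
    |logIntegralExp ν β F| ≤ M + β * |Real.log (ν.real Set.univ)| := by
  have hν : 0 < ν.real Set.univ := by
    simp [Measure.real, ENNReal.toReal_pos_iff, measure_lt_top, NeZero.ne]
  have hint := integrable_exp_div hβ hF hFM (ν := ν)
  have hupper : ∫ a, Real.exp (F a / β) ∂ν ≤ ν.real Set.univ * Real.exp (M / β) := by
    simpa using integral_mono hint (integrable_const _)
      fun a => Real.exp_div_le_exp_div_of_abs_le hβ (hFM a)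
  have hlower : ν.real Set.univ * Real.exp (-M / β) ≤ ∫ a, Real.exp (F a / β) ∂ν := by
    simpa using integral_mono (integrable_const _) hint
      fun a => Real.exp_le_exp.2 (div_le_div_of_nonneg_right (neg_le_of_abs_le (hFM a)) hβ.le)
  have hlog_upper := Real.log_le_log (integral_exp_div_pos hβ hF hFM) hupper
  have hlog_lower := Real.log_le_log (by positivity) hlower
  rw [Real.log_mul hν.ne' (Real.exp_pos _).ne', Real.log_exp] at hlog_upper hlog_lower
  have hlog : |Real.log (∫ a, Real.exp (F a / β) ∂ν)|
      ≤ M / β + |Real.log (ν.real Set.univ)| := by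
    rw [neg_div] at hlog_lower
    exact abs_le.2 ⟨by linarith [neg_abs_le (Real.log (ν.real Set.univ))],
      by linarith [le_abs_self (Real.log (ν.real Set.univ))]⟩
  calc |logIntegralExp ν β F| ≤ β * (M / β + |Real.log (ν.real Set.univ)|) := by
        rw [logIntegralExp, abs_mul, abs_of_pos hβ]
        exact mul_le_mul_of_nonneg_left hlog hβ.le
    _ = M + β * |Real.log (ν.real Set.univ)| := by field_simp

theorem exp_sub_logIntegralExp_div [NeZero ν] (hβ : 0 < β) (hF : Measurable F)
    (hFM : ∀ a, |F a| ≤ M) (a : A) :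
    Real.exp ((F a - logIntegralExp ν β F) / β)
      = Real.exp (F a / β) / ∫ a, Real.exp (F a / β) ∂ν := by
  rw [logIntegralExp, sub_div, mul_div_cancel_left₀ _ hβ.ne', Real.exp_sub,
    Real.exp_log (integral_exp_div_pos hβ hF hFM)]

theorem integral_exp_sub_logIntegralExp_div [NeZero ν] (hβ : 0 < β) (hF : Measurable F)
    (hFM : ∀ a, |F a| ≤ M) : ∫ a, Real.exp ((F a - logIntegralExp ν β F) / β) ∂ν = 1 := by
  simp_rw [exp_sub_logIntegralExp_div hβ hF hFM, integral_div]
  exact div_self (integral_exp_div_pos hβ hF hFM).ne'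

theorem hasDerivAt_logIntegralExp [NeZero ν] {F F' : ℝ → A → ℝ} {ε M' : ℝ} {U : Set ℝ}
    (hU : U ∈ 𝓝 ε) (hβ : 0 < β) (hF_meas : ∀ e, Measurable (F e))
    (hF'_meas : Measurable (F' ε)) (hF_le : ∀ e ∈ U, ∀ a, |F e a| ≤ M)
    (hF'_le : ∀ e ∈ U, ∀ a, |F' e a| ≤ M') (hF : ∀ e ∈ U, ∀ a, HasDerivAt (F · a) (F' e a) e) :
    HasDerivAt (fun e => logIntegralExp ν β (F e))
      (∫ a, Real.exp ((F ε a - logIntegralExp ν β (F ε)) / β) * F' ε a ∂ν) ε := by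
  have hε := mem_of_mem_nhds hU
  have hZ : HasDerivAt (fun e => ∫ a, Real.exp (F e a / β) ∂ν)
      (∫ a, Real.exp (F ε a / β) * (F' ε a / β) ∂ν) ε := by
    refine hasDerivAt_integral_of_forall_abs_deriv_le hU
      (fun e => (Real.measurable_exp.comp ((hF_meas e).div_const β)).aestronglyMeasurable)
      (integrable_exp_div hβ (hF_meas ε) (hF_le ε hε))
      ((Real.measurable_exp.comp ((hF_meas ε).div_const β)).mul
        (hF'_meas.div_const β)).aestronglyMeasurable
      (C := Real.exp (M / β) * (M' / β)) (fun e he a => ?_)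
      fun e he a => ((hF e he a).div_const β).exp
    rw [abs_mul, abs_of_pos (Real.exp_pos _), abs_div, abs_of_pos hβ]
    exact mul_le_mul (Real.exp_div_le_exp_div_of_abs_le hβ (hF_le e he a))
      (div_le_div_of_nonneg_right (hF'_le e he a) hβ.le) (by positivity) (by positivity)
  have hZpos := integral_exp_div_pos hβ (hF_meas ε) (hF_le ε hε) (ν := ν)
  refine ((hZ.log hZpos.ne').const_mul β).congr_deriv ?_
  simp_rw [exp_sub_logIntegralExp_div hβ (hF_meas ε) (hF_le ε hε), div_mul_eq_mul_div,
    integral_div, mul_div_assoc', ← integral_const_mul]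
  congr 2 with a
  field_simp

end LogIntegralExp

variable {S A : Type*} [MeasurableSpace S] [MeasurableSpace A]

/-- Unlike `IsPolicyDensity`, normalization is required only for `t ≤ T`: beyond the horizon
`π*_t = exp (r_t / β)` is not normalized. -/
structure IsPolicyDensityUpTo (T : ℕ) (ν : Measure A) (p : ℕ → S → A → ℝ) : Prop where
  measurable : ∀ t, Measurable (Function.uncurry (p t))
  nonneg : ∀ t s a, 0 ≤ p t s a
  integral_eq_one : ∀ t ≤ T, ∀ s, ∫ a, p t s a ∂ν = 1

def stepReward (h : ℕ → S → A → ℝ) (t : ℕ) (τ : ℕ → S × A) : ℝ := h t (τ t).1 (τ t).2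

def perturb (r h : ℕ → S → A → ℝ) (e : ℝ) : ℕ → S → A → ℝ := fun t s a => r t s a + e * h t s a

variable {T : ℕ} {P : ℕ → Kernel (S × A) S} {ν : Measure A} {β : ℝ} {r p h : ℕ → S → A → ℝ}
  {t u : ℕ}

theorem IsPolicyDensityUpTo.integrable_mul (hp : IsPolicyDensityUpTo T ν p) (ht : t ≤ T)
    (s : S) {f : A → ℝ} {C : ℝ} (hfm : Measurable f) (hfC : ∀ a, |f a| ≤ C) :
    Integrable (fun a => p t s a * f a) ν :=
  (Integrable.of_integral_ne_zero (by simp [hp.integral_eq_one t ht s])).mul_bdd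
    hfm.aestronglyMeasurable (.of_forall hfC)

theorem IsBddReward.exists_forall_abs_le (hr : IsBddReward r) (T : ℕ) :
    ∃ C, ∀ t ≤ T, ∀ s a, |r t s a| ≤ C := by
  choose C hC using fun t => (hr t).2
  refine ⟨∑ t ∈ Finset.range (T + 1), |C t|, fun t ht s a => (hC t s a).trans ?_⟩
  exact (le_abs_self _).trans (Finset.single_le_sum (fun i _ => abs_nonneg (C i))
    (Finset.mem_range.2 (Nat.lt_succ_of_le ht)))

theorem measurable_perturb (hrm : ∀ t, Measurable (Function.uncurry (r t)))
    (hhm : ∀ t, Measurable (Function.uncurry (h t))) (e : ℝ) (t : ℕ) :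
    Measurable (Function.uncurry (perturb r h e t)) :=
  (hrm t).add ((hhm t).const_mul e)

omit [MeasurableSpace S] [MeasurableSpace A] in
theorem abs_perturb_le {Cr Ch e c : ℝ} (hrC : ∀ t ≤ T, ∀ s a, |r t s a| ≤ Cr)
    (hhC : ∀ t ≤ T, ∀ s a, |h t s a| ≤ Ch) (he : |e| ≤ c) :
    ∀ t ≤ T, ∀ s a, |perturb r h e t s a| ≤ Cr + c * Ch := fun t ht s a =>
  (abs_add_le _ _).trans <| add_le_add (hrC t ht s a) <| by
    rw [abs_mul]
    exact mul_le_mul he (hhC t ht s a) (abs_nonneg _) ((abs_nonneg e).trans he)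

section SoftOptimal

variable (T P ν β r) in
theorem Vstar_of_lt (ht : T < t) (s : S) : Vstar T P ν β r t s = 0 := by
  rw [Vstar, if_pos ht]

variable (T P ν β r) in
theorem Vstar_of_le (ht : t ≤ T) (s : S) :
    Vstar T P ν β r t s = logIntegralExp ν β (Qstar T P ν β r t s) := by
  rw [Vstar, if_neg (not_lt.2 ht)]
  rfl

variable (T P ν β r) in
theorem piStar_of_le (ht : t ≤ T) (s : S) (a : A) :
    piStar T P ν β r t s a
      = Real.exp ((Qstar T P ν β r t s a - logIntegralExp ν β (Qstar T P ν β r t s)) / β) := by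
  rw [piStar, Vstar_of_le T P ν β r ht]

theorem measurable_Vstar [SFinite ν] (hrm : ∀ t, Measurable (Function.uncurry (r t))) :
    ∀ t, Measurable (Vstar T P ν β r t) := by
  refine Nat.backward_induction T (fun t ht => ?_) fun t ht hV => ?_
  · rw [funext (Vstar_of_lt T P ν β r ht)]
    exact measurable_const
  · rw [funext (Vstar_of_le T P ν β r ht)]
    have hQ : Measurable (Function.uncurry (Qstar T P ν β r t)) :=
      (hrm t).add hV.stronglyMeasurable.integral_kernel.measurable
    exact ((Real.measurable_exp.comp (hQ.div_const β)).stronglyMeasurable.integral_prod_right'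
      |>.measurable.log).const_mul β

theorem measurable_Qstar [SFinite ν] (hrm : ∀ t, Measurable (Function.uncurry (r t))) (t : ℕ) :
    Measurable (Function.uncurry (Qstar T P ν β r t)) :=
  (hrm t).add (measurable_Vstar hrm (t + 1)).stronglyMeasurable.integral_kernel.measurable

variable [∀ t, IsMarkovKernel (P t)] [IsFiniteMeasure ν] [NeZero ν]

theorem abs_Vstar_le (hβ : 0 < β) (hrm : ∀ t, Measurable (Function.uncurry (r t))) {C : ℝ}
    (hrC : ∀ t ≤ T, ∀ s a, |r t s a| ≤ C) :
    ∀ t s, |Vstar T P ν β r t s| ≤ (T + 1 - t : ℕ) * (C + β * |Real.log (ν.real Set.univ)|) := by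
  refine Nat.backward_induction T (fun t ht s => ?_) fun t ht hV s => ?_
  · rw [Vstar_of_lt T P ν β r ht, abs_zero, Nat.sub_eq_zero_of_le ht, Nat.cast_zero, zero_mul]
  · have hQ : |logIntegralExp ν β (Qstar T P ν β r t s)| ≤ _ := abs_logIntegralExp_le hβ
      ((measurable_Qstar hrm t).comp measurable_prodMk_left)
      fun a => abs_add_integral_le (hrC t ht s a) hV
    rw [Vstar_of_le T P ν β r ht, show T + 1 - t = T + 1 - (t + 1) + 1 by omega, Nat.cast_succ,
      add_one_mul]
    linarith

theorem isPolicyDensityUpTo_piStar (hβ : 0 < β) (hrm : ∀ t, Measurable (Function.uncurry (r t)))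
    {C : ℝ} (hrC : ∀ t ≤ T, ∀ s a, |r t s a| ≤ C) :
    IsPolicyDensityUpTo T ν (piStar T P ν β r) where
  measurable t := Real.measurable_exp.comp
    (((measurable_Qstar hrm t).sub ((measurable_Vstar hrm t).comp measurable_fst)).div_const β)
  nonneg _ _ _ := (Real.exp_pos _).le
  integral_eq_one t ht s := by
    simp_rw [piStar_of_le T P ν β r ht]
    exact integral_exp_sub_logIntegralExp_div hβ
      ((measurable_Qstar hrm t).comp measurable_prodMk_left)
      fun a => abs_add_integral_le (hrC t ht s a) (abs_Vstar_le hβ hrm hrC (t + 1))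

end SoftOptimal

section PolicyValue

variable (T P ν p h) in
theorem Vpol_of_lt (ht : T < t) (s : S) : Vpol T P ν β p h t s = 0 := by
  rw [Vpol, if_pos ht]

variable (T P ν p h) in
theorem Vpol_zero_of_le (ht : t ≤ T) (s : S) :
    Vpol T P ν 0 p h t s = ∫ a, p t s a * Qpol T P ν 0 p h t s a ∂ν := by
  rw [Vpol, if_neg (not_lt.2 ht)]
  congr 1 with a
  rw [Qpol]
  ring

theorem measurable_Vpol [SFinite ν] (hpm : ∀ t, Measurable (Function.uncurry (p t)))
    (hhm : ∀ t, Measurable (Function.uncurry (h t))) : ∀ t, Measurable (Vpol T P ν 0 p h t) := by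
  refine Nat.backward_induction T (fun t ht => ?_) fun t ht hV => ?_
  · rw [funext (Vpol_of_lt T P ν p h ht)]
    exact measurable_const
  · rw [funext (Vpol_zero_of_le T P ν p h ht)]
    exact ((hpm t).mul ((hhm t).add hV.stronglyMeasurable.integral_kernel.measurable))
      |>.stronglyMeasurable.integral_prod_right'.measurable

theorem measurable_Qpol [SFinite ν] (hpm : ∀ t, Measurable (Function.uncurry (p t)))
    (hhm : ∀ t, Measurable (Function.uncurry (h t))) (t : ℕ) :
    Measurable (Function.uncurry (Qpol T P ν 0 p h t)) :=
  (hhm t).add (measurable_Vpol hpm hhm (t + 1)).stronglyMeasurable.integral_kernel.measurable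

variable [∀ t, IsMarkovKernel (P t)]

theorem abs_Vpol_le [SFinite ν] (hp : IsPolicyDensityUpTo T ν p)
    (hhm : ∀ t, Measurable (Function.uncurry (h t))) {C : ℝ}
    (hhC : ∀ t ≤ T, ∀ s a, |h t s a| ≤ C) :
    ∀ t s, |Vpol T P ν 0 p h t s| ≤ (T + 1 - t : ℕ) * C := by
  refine Nat.backward_induction T (fun t ht s => ?_) fun t ht hV s => ?_
  · rw [Vpol_of_lt T P ν p h ht, abs_zero, Nat.sub_eq_zero_of_le ht, Nat.cast_zero, zero_mul]
  · rw [Vpol_zero_of_le T P ν p h ht, show T + 1 - t = T + 1 - (t + 1) + 1 by omega,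
      Nat.cast_succ, add_one_mul, add_comm]
    exact abs_integral_mul_le (hp.nonneg t s) (hp.integral_eq_one t ht s)
      ((measurable_Qpol hp.measurable hhm t).comp measurable_prodMk_left)
      fun a => abs_add_integral_le (hhC t ht s a) hV

end PolicyValue

section Derivative

variable [∀ t, IsMarkovKernel (P t)] [IsFiniteMeasure ν] [NeZero ν] {Cr Ch : ℝ}

theorem hasDerivAt_integral_Vstar_perturb (hβ : 0 < β)
    (hrm : ∀ t, Measurable (Function.uncurry (r t)))
    (hhm : ∀ t, Measurable (Function.uncurry (h t))) (hrC : ∀ t ≤ T, ∀ s a, |r t s a| ≤ Cr)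
    (hhC : ∀ t ≤ T, ∀ s a, |h t s a| ≤ Ch)
    (hV : ∀ e s, HasDerivAt (fun e => Vstar T P ν β (perturb r h e) t s)
      (Vpol T P ν 0 (piStar T P ν β (perturb r h e)) h t s) e)
    (μ : Measure S) [IsFiniteMeasure μ] (ε : ℝ) :
    HasDerivAt (fun e => ∫ s, Vstar T P ν β (perturb r h e) t s ∂μ)
      (∫ s, Vpol T P ν 0 (piStar T P ν β (perturb r h ε)) h t s ∂μ) ε := by
  have hπ (e : ℝ) : IsPolicyDensityUpTo T ν (piStar T P ν β (perturb r h e)) :=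
    isPolicyDensityUpTo_piStar hβ (measurable_perturb hrm hhm e) (abs_perturb_le hrC hhC le_rfl)
  exact hasDerivAt_integral_of_forall_abs_deriv_le Filter.univ_mem
    (fun e => (measurable_Vstar (measurable_perturb hrm hhm e) _).aestronglyMeasurable)
    (integrable_of_forall_abs_le (measurable_Vstar (measurable_perturb hrm hhm ε) _)
      (abs_Vstar_le hβ (measurable_perturb hrm hhm ε) (abs_perturb_le hrC hhC le_rfl) _))
    (measurable_Vpol (hπ ε).measurable hhm _).aestronglyMeasurable
    (fun e _ => abs_Vpol_le (hπ e) hhm hhC _) fun e _ _ => hV e _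

theorem hasDerivAt_Qstar_perturb (hβ : 0 < β) (hrm : ∀ t, Measurable (Function.uncurry (r t)))
    (hhm : ∀ t, Measurable (Function.uncurry (h t))) (hrC : ∀ t ≤ T, ∀ s a, |r t s a| ≤ Cr)
    (hhC : ∀ t ≤ T, ∀ s a, |h t s a| ≤ Ch)
    (hV : ∀ e s, HasDerivAt (fun e => Vstar T P ν β (perturb r h e) (t + 1) s)
      (Vpol T P ν 0 (piStar T P ν β (perturb r h e)) h (t + 1) s) e) (ε : ℝ) (s : S) (a : A) :
    HasDerivAt (fun e => Qstar T P ν β (perturb r h e) t s a)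
      (Qpol T P ν 0 (piStar T P ν β (perturb r h ε)) h t s a) ε :=
  ((hasDerivAt_mul_const (h t s a)).const_add (r t s a)).add
    (hasDerivAt_integral_Vstar_perturb hβ hrm hhm hrC hhC hV (P t (s, a)) ε)

theorem hasDerivAt_Vstar_perturb (hβ : 0 < β) (hrm : ∀ t, Measurable (Function.uncurry (r t)))
    (hhm : ∀ t, Measurable (Function.uncurry (h t))) (hrC : ∀ t ≤ T, ∀ s a, |r t s a| ≤ Cr)
    (hhC : ∀ t ≤ T, ∀ s a, |h t s a| ≤ Ch) :
    ∀ t ε s, HasDerivAt (fun e => Vstar T P ν β (perturb r h e) t s)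
      (Vpol T P ν 0 (piStar T P ν β (perturb r h ε)) h t s) ε := by
  refine Nat.backward_induction T (fun t ht ε s => ?_) fun t ht hV ε s => ?_
  · simp only [Vstar_of_lt T P ν β _ ht, Vpol_of_lt T P ν _ h ht]
    exact hasDerivAt_const ε 0
  have hπ (e : ℝ) : IsPolicyDensityUpTo T ν (piStar T P ν β (perturb r h e)) :=
    isPolicyDensityUpTo_piStar hβ (measurable_perturb hrm hhm e) (abs_perturb_le hrC hhC le_rfl)
  have hball (e : ℝ) (he : e ∈ Metric.ball ε 1) : |e| ≤ |ε| + 1 := by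
    rw [Metric.mem_ball, Real.dist_eq] at he
    linarith [abs_sub_abs_le_abs_sub e ε]
  have hQ_le (e : ℝ) (he : e ∈ Metric.ball ε 1) (a : A) :=
    abs_add_integral_le (μ := P t (s, a)) (abs_perturb_le hrC hhC (hball e he) t ht s a)
      (abs_Vstar_le (P := P) (ν := ν) hβ (measurable_perturb hrm hhm e)
        (abs_perturb_le hrC hhC (hball e he)) (t + 1))
  simp only [Vstar_of_le T P ν β _ ht]
  rw [Vpol_zero_of_le T P ν _ h ht]
  simp_rw [piStar_of_le T P ν β _ ht]
  exact hasDerivAt_logIntegralExp (Metric.ball_mem_nhds ε one_pos) hβ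
    (fun e => (measurable_Qstar (measurable_perturb hrm hhm e) t).comp measurable_prodMk_left)
    ((measurable_Qpol (hπ ε).measurable hhm t).comp measurable_prodMk_left) hQ_le
    (fun e _ a => abs_add_integral_le (hhC t ht s a) (abs_Vpol_le (hπ e) hhm hhC (t + 1)))
    fun e _ a => hasDerivAt_Qstar_perturb hβ hrm hhm hrC hhC hV e s a

end Derivative

section Trajectory

variable [IsFiniteMeasure ν]

theorem integral_densKernel (hp : IsPolicyDensityUpTo T ν p) (t : ℕ) (s : S) (φ : A → ℝ) :
    ∫ a, φ a ∂densKernel ν p t s = ∫ a, p t s a * φ a ∂ν := by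
  rw [densKernel, Kernel.withDensity_apply _
    (by exact ENNReal.measurable_ofReal.comp (hp.measurable t)), Kernel.const_apply,
    integral_withDensity_eq_integral_toReal_smul
      (by exact ENNReal.measurable_ofReal.comp ((hp.measurable t).comp measurable_prodMk_left))
      (.of_forall fun _ => ENNReal.ofReal_lt_top)]
  simp_rw [ENNReal.toReal_ofReal (hp.nonneg t s _), smul_eq_mul]

theorem isProbabilityMeasure_densKernel (hp : IsPolicyDensityUpTo T ν p) :
    ∀ t ≤ T, ∀ s, IsProbabilityMeasure (densKernel ν p t s) := fun t ht s => by
  have h1 := integral_densKernel hp t s fun _ => (1 : ℝ)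
  simp only [integral_const, smul_eq_mul, mul_one, hp.integral_eq_one t ht s] at h1
  exact ⟨ENNReal.toReal_eq_one_iff _ |>.1 h1⟩

variable [Nonempty S] [Nonempty A] {pol : ℕ → Kernel S A}

theorem polExp_of_lt (ht : T < t) (g : (ℕ → S × A) → ℝ) (s : S) :
    polExp T P pol g t s = g fun _ => (Classical.arbitrary S, Classical.arbitrary A) := by
  rw [polExp, if_pos ht]

theorem polExp_stepReward_of_ne (hu : u ≤ T) (hut : u ≠ t) (s : S) :
    polExp T P pol (stepReward h t) u s
      = ∫ a, ∫ s', polExp T P pol (stepReward h t) (u + 1) s' ∂P u (s, a) ∂pol u s := by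
  have hupd (a : A) : (fun τ => stepReward h t (Function.update τ u (s, a))) = stepReward h t :=
    funext fun τ => by simp [stepReward, Function.update_of_ne hut.symm]
  rw [polExp, if_neg (not_lt.2 hu)]
  simp only [hupd]

variable [∀ t, IsMarkovKernel (P t)]

theorem polExp_const (hpol : ∀ t ≤ T, ∀ s, IsProbabilityMeasure (pol t s)) (c : ℝ) :
    ∀ t s, polExp T P pol (fun _ => c) t s = c := by
  refine Nat.backward_induction T (fun t ht s => polExp_of_lt ht _ s) fun t ht hc s => ?_
  have := hpol t ht s
  rw [polExp, if_neg (not_lt.2 ht)]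
  simp [hc]

theorem polExp_stepReward_self (hpol : ∀ t ≤ T, ∀ s, IsProbabilityMeasure (pol t s))
    (ht : t ≤ T) (s : S) : polExp T P pol (stepReward h t) t s = ∫ a, h t s a ∂pol t s := by
  rw [polExp, if_neg (not_lt.2 ht)]
  simp [stepReward, polExp_const hpol]

theorem measurable_polExp_stepReward (hp : IsPolicyDensityUpTo T ν p)
    (hhm : Measurable (Function.uncurry (h t))) :
    ∀ u, Measurable (polExp T P (densKernel ν p) (stepReward h t) u) := by
  refine Nat.backward_induction T (fun u hu => ?_) fun u hu hE => ?_
  · rw [funext (polExp_of_lt hu _)]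
    exact measurable_const
  rcases eq_or_ne u t with rfl | hut
  · rw [funext (polExp_stepReward_self (isProbabilityMeasure_densKernel hp) hu)]
    simp_rw [integral_densKernel hp]
    exact ((hp.measurable u).mul hhm).stronglyMeasurable.integral_prod_right'.measurable
  · rw [funext (polExp_stepReward_of_ne hu hut)]
    simp_rw [integral_densKernel hp]
    exact ((hp.measurable u).mul hE.stronglyMeasurable.integral_kernel.measurable)
      |>.stronglyMeasurable.integral_prod_right'.measurable

theorem abs_polExp_stepReward_le (hp : IsPolicyDensityUpTo T ν p)
    (hhm : Measurable (Function.uncurry (h t))) {C : ℝ} (hhC : ∀ s a, |h t s a| ≤ C) :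
    ∀ u s, |polExp T P (densKernel ν p) (stepReward h t) u s| ≤ C := by
  refine Nat.backward_induction T (fun u hu s => ?_) fun u hu hE s => ?_
  · rw [polExp_of_lt hu]
    exact hhC _ _
  rcases eq_or_ne u t with rfl | hut
  · rw [polExp_stepReward_self (isProbabilityMeasure_densKernel hp) hu, integral_densKernel hp]
    exact abs_integral_mul_le (hp.nonneg u s) (hp.integral_eq_one u hu s)
      (hhm.comp measurable_prodMk_left) (hhC s)
  · rw [polExp_stepReward_of_ne hu hut, integral_densKernel hp]
    exact abs_integral_mul_le (hp.nonneg u s) (hp.integral_eq_one u hu s)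
      ((measurable_polExp_stepReward hp hhm (u + 1)).stronglyMeasurable.integral_kernel
        |>.measurable.comp measurable_prodMk_left)
      fun a => abs_integral_le_of_forall_abs_le hE

theorem sum_polExp_stepReward_succ (hp : IsPolicyDensityUpTo T ν p)
    (hhm : ∀ t, Measurable (Function.uncurry (h t))) {C : ℝ}
    (hhC : ∀ t ≤ T, ∀ s a, |h t s a| ≤ C) (hu : u ≤ T) (s : S) :
    ∑ t ∈ Finset.Icc (u + 1) T, polExp T P (densKernel ν p) (stepReward h t) u s
      = ∫ a, p u s a * ∫ s', ∑ t ∈ Finset.Icc (u + 1) T,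
          polExp T P (densKernel ν p) (stepReward h t) (u + 1) s' ∂P u (s, a) ∂ν := by
  have hE_le {t} (ht : t ∈ Finset.Icc (u + 1) T) :=
    abs_polExp_stepReward_le (P := P) hp (hhm t) (hhC t (Finset.mem_Icc.1 ht).2) (u + 1)
  have hE_meas (t) := measurable_polExp_stepReward (P := P) hp (hhm t) (u + 1)
  have hG_int {t} (ht : t ∈ Finset.Icc (u + 1) T) : Integrable (fun a => p u s a *
      ∫ s', polExp T P (densKernel ν p) (stepReward h t) (u + 1) s' ∂P u (s, a)) ν :=
    hp.integrable_mul hu s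
      ((hE_meas t).stronglyMeasurable.integral_kernel.measurable.comp measurable_prodMk_left)
      fun a => abs_integral_le_of_forall_abs_le (hE_le ht)
  calc ∑ t ∈ Finset.Icc (u + 1) T, polExp T P (densKernel ν p) (stepReward h t) u s
      = ∑ t ∈ Finset.Icc (u + 1) T, ∫ a, p u s a *
          ∫ s', polExp T P (densKernel ν p) (stepReward h t) (u + 1) s' ∂P u (s, a) ∂ν :=
        Finset.sum_congr rfl fun t ht => by
          rw [polExp_stepReward_of_ne hu (by simp at ht; omega), integral_densKernel hp]
    _ = _ := by
        rw [← integral_finsetSum _ fun t ht => hG_int ht]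
        simp_rw [integral_finsetSum _ fun t ht =>
          integrable_of_forall_abs_le (hE_meas t) (hE_le ht), Finset.mul_sum]

theorem sum_polExp_stepReward_eq_Vpol (hp : IsPolicyDensityUpTo T ν p)
    (hhm : ∀ t, Measurable (Function.uncurry (h t))) {C : ℝ}
    (hhC : ∀ t ≤ T, ∀ s a, |h t s a| ≤ C) :
    ∀ u s, ∑ t ∈ Finset.Icc u T, polExp T P (densKernel ν p) (stepReward h t) u s
      = Vpol T P ν 0 p h u s := by
  refine Nat.backward_induction T (fun u hu s => ?_) fun u hu hV s => ?_
  · rw [Finset.Icc_eq_empty (by omega), Finset.sum_empty, Vpol_of_lt T P ν p h hu]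
  rw [← Finset.add_sum_Ioc_eq_sum_Icc hu, ← Finset.Icc_add_one_left_eq_Ioc,
    sum_polExp_stepReward_succ hp hhm hhC hu, polExp_stepReward_self
      (isProbabilityMeasure_densKernel hp) hu, integral_densKernel hp]
  have hr_int : Integrable (fun a => p u s a * h u s a) ν :=
    hp.integrable_mul hu s ((hhm u).comp measurable_prodMk_left) (hhC u hu s)
  have hV_int : Integrable
      (fun a => p u s a * ∫ s', Vpol T P ν 0 p h (u + 1) s' ∂P u (s, a)) ν :=
    hp.integrable_mul hu s
      ((measurable_Vpol hp.measurable hhm (u + 1)).stronglyMeasurable.integral_kernel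
        |>.measurable.comp measurable_prodMk_left)
      fun a => abs_integral_le_of_forall_abs_le (abs_Vpol_le hp hhm hhC (u + 1))
  simp_rw [hV]
  rw [← integral_add hr_int hV_int, Vpol_zero_of_le T P ν p h hu]
  simp_rw [Qpol, mul_add]

theorem Jpol_zero_eq_sum_integral_stepReward (hp : IsPolicyDensityUpTo T ν p)
    (hhm : ∀ t, Measurable (Function.uncurry (h t))) {C : ℝ}
    (hhC : ∀ t ≤ T, ∀ s a, |h t s a| ≤ C) {P0 : Measure S} [IsFiniteMeasure P0]
    {μ : Measure (ℕ → S × A)} (hμ : IsTrajLaw T P P0 (densKernel ν p) μ) :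
    Jpol T P ν P0 0 p h = ∑ t ∈ Finset.Icc 1 T, ∫ τ, stepReward h t τ ∂μ := by
  calc Jpol T P ν P0 0 p h
      = ∫ s, ∑ t ∈ Finset.Icc 1 T, polExp T P (densKernel ν p) (stepReward h t) 1 s ∂P0 := by
        simp_rw [sum_polExp_stepReward_eq_Vpol hp hhm hhC]
        rfl
    _ = ∑ t ∈ Finset.Icc 1 T, ∫ s, polExp T P (densKernel ν p) (stepReward h t) 1 s ∂P0 :=
        integral_finsetSum _ fun t ht => integrable_of_forall_abs_le
          (measurable_polExp_stepReward hp (hhm t) 1)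
          (abs_polExp_stepReward_le hp (hhm t) (hhC t (Finset.mem_Icc.1 ht).2) 1)
    _ = ∑ t ∈ Finset.Icc 1 T, ∫ τ, stepReward h t τ ∂μ :=
        Finset.sum_congr rfl fun t ht => (hμ.2 _ ((hhm t).comp (measurable_pi_apply t))
          ⟨C, fun τ => hhC t (Finset.mem_Icc.1 ht).2 _ _⟩).symm

end Trajectory

end IRL

open MeasureTheory ProbabilityTheory Real
open scoped ENNReal

theorem directional_derivative_soft_optimal_value_general
    {S A : Type*} [MeasurableSpace S] [MeasurableSpace A] [Nonempty S] [Nonempty A]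
    (T : ℕ)
    (P0 : Measure S) [IsProbabilityMeasure P0]
    (P : ℕ → Kernel (S × A) S) [∀ t, IsMarkovKernel (P t)]
    (ν : Measure A) [IsFiniteMeasure ν] (hν : ν Set.univ ≠ 0)
    (β : ℝ) (hβ : 0 < β)
    (r h : ℕ → S → A → ℝ) (hr : IRL.IsBddReward r) (hh : IRL.IsBddReward h)
    -- the perturbed reward `r^ε = r + εh`
    (rPert : ℝ → ℕ → S → A → ℝ)
    (hrPert : rPert = fun ε t s a => r t s a + ε * h t s a) :
    -- derivative of `V*` and `Q*`
    (∀ ε : ℝ, ∀ t, 1 ≤ t → t ≤ T →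
      (∀ s, HasDerivAt (fun e : ℝ => IRL.Vstar T P ν β (rPert e) t s)
        (IRL.Vpol T P ν 0 (IRL.piStar T P ν β (rPert ε)) h t s) ε) ∧
      (∀ s a, HasDerivAt (fun e : ℝ => IRL.Qstar T P ν β (rPert e) t s a)
        (IRL.Qpol T P ν 0 (IRL.piStar T P ν β (rPert ε)) h t s a) ε)) ∧
    -- derivative of `J*`
    (∀ ε : ℝ, HasDerivAt (fun e : ℝ => IRL.Jstar T P ν P0 β (rPert e))
      (IRL.Jpol T P ν P0 0 (IRL.piStar T P ν β (rPert ε)) h) ε) ∧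
    -- the derivative of `J*` is the expected return of `h` under `π^ε`
    (∀ ε : ℝ, ∀ μ : Measure (ℕ → S × A),
      IRL.IsTrajLaw T P P0 (IRL.densKernel ν (IRL.piStar T P ν β (rPert ε))) μ →
      IRL.Jpol T P ν P0 0 (IRL.piStar T P ν β (rPert ε)) h
        = ∑ t ∈ Finset.Icc 1 T, ∫ τ, h t (τ t).1 (τ t).2 ∂μ) := by
  subst hrPert
  have : NeZero ν := ⟨Measure.measure_univ_ne_zero.1 hν⟩
  obtain ⟨Cr, hrC⟩ := hr.exists_forall_abs_le T
  obtain ⟨Ch, hhC⟩ := hh.exists_forall_abs_le T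
  have hrm (t : ℕ) : Measurable (Function.uncurry (r t)) := (hr t).1
  have hhm (t : ℕ) : Measurable (Function.uncurry (h t)) := (hh t).1
  have hV := IRL.hasDerivAt_Vstar_perturb (P := P) (ν := ν) hβ hrm hhm hrC hhC
  refine ⟨fun ε t _ _ => ⟨fun s => hV t ε s, fun s a => ?_⟩, fun ε => ?_, fun ε μ hμ => ?_⟩
  · exact IRL.hasDerivAt_Qstar_perturb hβ hrm hhm hrC hhC (hV (t + 1)) ε s a
  · exact IRL.hasDerivAt_integral_Vstar_perturb hβ hrm hhm hrC hhC (hV 1) P0 ε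
  · exact IRL.Jpol_zero_eq_sum_integral_stepReward (IRL.isPolicyDensityUpTo_piStar hβ
      (IRL.measurable_perturb hrm hhm ε) (IRL.abs_perturb_le hrC hhC le_rfl)) hhm hhC hμ

/-- **Directional derivative of the soft-optimal value in the reward** (Lemma `first_der`).
For `β > 0` and bounded measurable rewards `r, h`, with `r^ε := r + εh` and
`π^ε := π*_{r^ε}`, the maps `ε ↦ V*_{t,r^ε}(s)`, `ε ↦ Q*_{t,r^ε}(s,a)` and `ε ↦ J*(r^ε)` are
differentiable with derivatives `V^{π^ε,0}_{t,h}(s)`, `Q^{π^ε,0}_{t,h}(s,a)` and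
`J⁰(h,π^ε) = Σ_t E^{π^ε}[h_t(s_t,a_t)]` respectively. -/
theorem directional_derivative_soft_optimal_value
    {S A : Type*} [MeasurableSpace S] [MeasurableSpace A] [Nonempty S] [Nonempty A]
    (T : ℕ) (hT : 1 ≤ T)
    (P0 : Measure S) [IsProbabilityMeasure P0]
    (P : ℕ → Kernel (S × A) S) [∀ t, IsMarkovKernel (P t)]
    (ν : Measure A) [IsFiniteMeasure ν] (hν : ν Set.univ ≠ 0)
    (β : ℝ) (hβ : 0 < β)
    (r h : ℕ → S → A → ℝ) (hr : IRL.IsBddReward r) (hh : IRL.IsBddReward h)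
    -- the perturbed reward `r^ε = r + εh`
    (rPert : ℝ → ℕ → S → A → ℝ)
    (hrPert : rPert = fun ε t s a => r t s a + ε * h t s a) :
    -- derivative of `V*` and `Q*`
    (∀ ε : ℝ, ∀ t, 1 ≤ t → t ≤ T →
      (∀ s, HasDerivAt (fun e : ℝ => IRL.Vstar T P ν β (rPert e) t s)
        (IRL.Vpol T P ν 0 (IRL.piStar T P ν β (rPert ε)) h t s) ε) ∧
      (∀ s a, HasDerivAt (fun e : ℝ => IRL.Qstar T P ν β (rPert e) t s a)
        (IRL.Qpol T P ν 0 (IRL.piStar T P ν β (rPert ε)) h t s a) ε)) ∧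
    -- derivative of `J*`
    (∀ ε : ℝ, HasDerivAt (fun e : ℝ => IRL.Jstar T P ν P0 β (rPert e))
      (IRL.Jpol T P ν P0 0 (IRL.piStar T P ν β (rPert ε)) h) ε) ∧
    -- the derivative of `J*` is the expected return of `h` under `π^ε`
    (∀ ε : ℝ, ∀ μ : Measure (ℕ → S × A),
      IRL.IsTrajLaw T P P0 (IRL.densKernel ν (IRL.piStar T P ν β (rPert ε))) μ →
      IRL.Jpol T P ν P0 0 (IRL.piStar T P ν β (rPert ε)) h
        = ∑ t ∈ Finset.Icc 1 T, ∫ τ, h t (τ t).1 (τ t).2 ∂μ) :=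
  directional_derivative_soft_optimal_value_general T P0 P ν hν β hβ r h hr hh rPert hrPert
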